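/- Let P^{(γ,δ)}_ν(t) = (1/ν!) Σ_{k=0}^ν (1/(2^k k!)) (−ν)_k (γ+δ+ν+1)_k (γ+k+1)_{ν−k} (1−t)^k be the Jacobi polynomial, where (x)_k is the Pochhammer symbol. If γ + 1 > 0 and γ + δ + 2ν < 0, then P^{(γ,δ)}_ν(0) > 0. -/

import Mathlib

/-- The Pochhammer symbol `(x)_k = x(x+1)⋯(x+k−1)`. -/
noncomputable def poch (x : ℝ) (k : ℕ) : ℝ := ∏ j ∈ Finset.range k, (x + j)

/-- The Jacobi polynomial
`P^{(γ,δ)}_ν(t) = (1/ν!) Σ_{k=0}^ν (1/(2^k k!)) (−ν)_k (γ+δ+ν+1)_k (γ+k+1)_{ν−k} (1−t)^k`. -/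
noncomputable def jacobiP (γ δ : ℝ) (ν : ℕ) (t : ℝ) : ℝ :=
  (1 / (Nat.factorial ν : ℝ)) * ∑ k ∈ Finset.range (ν + 1),
    (1 / (2 ^ k * (Nat.factorial k : ℝ))) * poch (-(ν : ℝ)) k
      * poch (γ + δ + ν + 1) k * poch (γ + k + 1) (ν - k) * (1 - t) ^ k

/-! Every summand of `jacobiP γ δ ν 0` is positive: `(γ + k + 1)_{ν-k}` has only positive factors,
while `(-ν)_k` and `(γ + δ + ν + 1)_k` have only negative factors, `k` of each. -/

theorem poch_pos {x : ℝ} (hx : 0 < x) (k : ℕ) : 0 < poch x k :=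
  Finset.prod_pos fun j _ => add_pos_of_pos_of_nonneg hx j.cast_nonneg

theorem poch_mul_poch_pos {x y : ℝ} {k : ℕ} (hx : x + k < 1) (hy : y + k < 1) :
    0 < poch x k * poch y k := by
  rw [poch, poch, ← Finset.prod_mul_distrib]
  refine Finset.prod_pos fun j hj => mul_pos_of_neg_of_neg ?_ ?_
  all_goals
    have hjk : (j : ℝ) + 1 ≤ k := by exact_mod_cast Finset.mem_range.mp hj
    linarith

theorem jacobiP_summand_pos (γ δ : ℝ) {ν k : ℕ} (hγ : 0 < γ + 1)
    (hν : γ + δ + 2 * ν < 0) (hk : k ≤ ν) :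
    0 < 1 / (2 ^ k * (Nat.factorial k : ℝ)) * poch (-(ν : ℝ)) k
      * poch (γ + δ + ν + 1) k * poch (γ + k + 1) (ν - k) * (1 - 0) ^ k := by
  have hkν : (k : ℝ) ≤ ν := by exact_mod_cast hk
  have hneg : 0 < poch (-(ν : ℝ)) k * poch (γ + δ + ν + 1) k :=
    poch_mul_poch_pos (by linarith) (by linarith)
  have hpos : 0 < poch (γ + k + 1) (ν - k) := poch_pos (by linarith [(k.cast_nonneg : (0 : ℝ) ≤ k)]) _
  rw [sub_zero, one_pow, mul_one, mul_assoc (1 / _)]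
  exact mul_pos (mul_pos (by positivity) hneg) hpos

/-- If `γ + 1 > 0` and `γ + δ + 2ν < 0` then `P^{(γ,δ)}_ν(0) > 0`. -/
theorem jacobiP_pos_at_zero (γ δ : ℝ) (ν : ℕ) (hγ : 0 < γ + 1)
    (hν : γ + δ + 2 * ν < 0) :
    0 < jacobiP γ δ ν 0 := by
  refine mul_pos (by positivity) (Finset.sum_pos (fun k hk => ?_) Finset.nonempty_range_add_one)
  exact jacobiP_summand_pos γ δ hγ hν (Nat.lt_succ_iff.mp (Finset.mem_range.mp hk))
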